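/- In any model I of the TBox T_A (containing ⊤ ⊑ A_f for final states f, ∃r.A_{s'} ⊑ A_s for role transitions, A_{s'} ⊓ B ⊑ A_s for concept-test transitions, and A_{s'} ⊓ A_{s''} ⊑ A_s for nested-test transitions with s'' the initial state of the nested automaton), for every state s of the nested NFA A: if there exists o' with (o,o') in the relation defined by A from s to the final states of its automaton, then o ∈ (A_s)^I. -/
import Mathlib

set_option autoImplicit false

namespace Paper

abbrev CN := ℕ
abbrev RN := ℕ
abbrev Ind := ℕ

structure Interp where
  Dom : Type
  nonempty : Nonempty Dom
  ind : Ind → Dom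
  cn : CN → Set Dom
  rn : RN → Dom → Dom → Prop

inductive ERole where
  | name (p : RN)
  | inv (p : RN)
deriving DecidableEq

def ERole.sem (I : Interp) : ERole → I.Dom → I.Dom → Prop
  | .name p => I.rn p
  | .inv p => fun x y => I.rn p y x

def ERole.einv : ERole → ERole
  | .name p => .inv p
  | .inv p => .name p

inductive Role where
  | er (r : ERole)
  | ctest (A : CN)
  | itest (a : Ind)
deriving DecidableEq

def Role.sem (I : Interp) : Role → I.Dom → I.Dom → Prop
  | .er r => r.sem I
  | .ctest A => fun x y => x = y ∧ x ∈ I.cn A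
  | .itest a => fun x y => x = I.ind a ∧ y = I.ind a

inductive NRE where
  | role (σ : Role)
  | comp (E₁ E₂ : NRE)
  | union (E₁ E₂ : NRE)
  | star (E : NRE)
  | test (E : NRE)

def NRE.sem (I : Interp) : NRE → I.Dom → I.Dom → Prop
  | .role σ => σ.sem I
  | .comp E₁ E₂ => fun x z => ∃ y, E₁.sem I x y ∧ E₂.sem I y z
  | .union E₁ E₂ => fun x y => E₁.sem I x y ∨ E₂.sem I x y
  | .star E => Relation.ReflTransGen (E.sem I)
  | .test E => fun x y => x = y ∧ ∃ z, E.sem I x z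

def Role.NoITest : Role → Prop
  | .itest _ => False
  | _ => True

def NRE.NoITest : NRE → Prop
  | .role σ => σ.NoITest
  | .comp E₁ E₂ => E₁.NoITest ∧ E₂.NoITest
  | .union E₁ E₂ => E₁.NoITest ∧ E₂.NoITest
  | .star E => E.NoITest
  | .test E => E.NoITest

def NRE.NestFree : NRE → Prop
  | .role _ => True
  | .comp E₁ E₂ => E₁.NestFree ∧ E₂.NestFree
  | .union E₁ E₂ => E₁.NestFree ∧ E₂.NestFree
  | .star E => E.NestFree
  | .test _ => False

structure NNFA where
  n : ℕ
  St : Fin n → Type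
  init : ∀ i, St i
  final : ∀ i, Set (St i)
  transRole : ∀ i, St i → Role → St i → Prop
  transTest : ∀ i, St i → Fin n → St i → Prop
  test_gt : ∀ i s j s', transTest i s j s' → i < j

inductive NNFA.Accept (M : NNFA) (I : Interp) :
    ∀ i : Fin M.n, M.St i → Set (M.St i) → I.Dom → I.Dom → Prop where
  | refl {i : Fin M.n} {s : M.St i} {F : Set (M.St i)} {o : I.Dom} :
      s ∈ F → NNFA.Accept M I i s F o o
  | step {i : Fin M.n} {s s' : M.St i} {F : Set (M.St i)} {σ : Role} {o o' o'' : I.Dom} :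
      M.transRole i s σ s' → σ.sem I o o' → NNFA.Accept M I i s' F o' o'' →
      NNFA.Accept M I i s F o o''
  | test {i : Fin M.n} {s s' : M.St i} {F : Set (M.St i)} {j : Fin M.n} {o o₁ o'' : I.Dom} :
      M.transTest i s j s' → NNFA.Accept M I j (M.init j) (M.final j) o o₁ →
      NNFA.Accept M I i s' F o o'' → NNFA.Accept M I i s F o o''

def NNFA.NoITest (M : NNFA) : Prop :=
  ∀ i (s : M.St i) (a : Ind) (s' : M.St i), ¬ M.transRole i s (.itest a) s'

inductive RTree (L : Type) where
  | leaf (l : L)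
  | one (l : L) (c : RTree L)
  | two (l : L) (c₁ c₂ : RTree L)

def RTree.label {L : Type} : RTree L → L
  | .leaf l => l
  | .one l _ => l
  | .two l _ _ => l

def RTree.leaves {L : Type} : RTree L → List L
  | .leaf l => [l]
  | .one _ c => c.leaves
  | .two _ c₁ c₂ => c₁.leaves ++ c₂.leaves

def NNFA.IsRun (M : NNFA) (I : Interp) : RTree ((Σ i, M.St i) × I.Dom) → Prop
  | .leaf _ => True
  | .one l c => M.IsRun I c ∧
      ∃ (σ : Role) (s' : M.St l.1.1) (o' : I.Dom),
        M.transRole l.1.1 l.1.2 σ s' ∧ σ.sem I l.2 o' ∧ c.label = (⟨l.1.1, s'⟩, o')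
  | .two l c₁ c₂ => M.IsRun I c₁ ∧ M.IsRun I c₂ ∧
      ∃ (j : Fin M.n) (s' : M.St l.1.1),
        M.transTest l.1.1 l.1.2 j s' ∧ c₁.label = (⟨l.1.1, s'⟩, l.2) ∧
        c₂.label = (⟨j, M.init j⟩, l.2)

def NNFA.FullRun (M : NNFA) (I : Interp) (i : Fin M.n) (o₁ : I.Dom) (s₁ : M.St i)
    (o₂ : I.Dom) (s₂ : M.St i) (t : RTree ((Σ j, M.St j) × I.Dom)) : Prop :=
  M.IsRun I t ∧ t.label = (⟨i, s₁⟩, o₁) ∧ ((⟨i, s₂⟩ : Σ j, M.St j), o₂) ∈ t.leaves ∧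
  ∀ l ∈ t.leaves, l ≠ ((⟨i, s₂⟩ : Σ j, M.St j), o₂) → l.1.2 ∈ M.final l.1.1

end Paper
namespace Paper

inductive Concept where
  | top
  | bot
  | atom (A : CN)
  | ex (r : ERole) (C : Concept)
  | conj (C D : Concept)

def Concept.sem (I : Interp) : Concept → Set I.Dom
  | .top => Set.univ
  | .bot => ∅
  | .atom A => I.cn A
  | .ex r C => {x | ∃ y, r.sem I x y ∧ y ∈ Concept.sem I C}
  | .conj C D => Concept.sem I C ∩ Concept.sem I D

inductive TAxiom where
  | ci (C D : Concept)
  | ri (r r' : ERole)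
  | nri (r r' : ERole)

def TAxiom.holds (I : Interp) : TAxiom → Prop
  | .ci C D => C.sem I ⊆ D.sem I
  | .ri r r' => ∀ x y, r.sem I x y → r'.sem I x y
  | .nri r r' => ∀ x y, ¬ (r.sem I x y ∧ r'.sem I x y)

inductive Assertion where
  | c (C : Concept) (a : Ind)
  | r (ρ : ERole) (a b : Ind)

def Assertion.holds (I : Interp) : Assertion → Prop
  | .c C a => I.ind a ∈ C.sem I
  | .r ρ a b => ρ.sem I (I.ind a) (I.ind b)

def ModelsT (I : Interp) (T : Set TAxiom) : Prop := ∀ ax ∈ T, ax.holds I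

def IsModel (I : Interp) (T : Set TAxiom) (A : Set Assertion) : Prop :=
  ModelsT I T ∧ ∀ α ∈ A, α.holds I

def Consistent (T : Set TAxiom) (A : Set Assertion) : Prop := ∃ I, IsModel I T A

def TEnt (T : Set TAxiom) (ax : TAxiom) : Prop := ∀ I, ModelsT I T → ax.holds I

def KBEnt (T : Set TAxiom) (A : Set Assertion) (α : Assertion) : Prop :=
  ∀ I, IsModel I T A → α.holds I

def TEntRole (T : Set TAxiom) (r r' : ERole) : Prop :=
  ∀ I, ModelsT I T → ∀ x y, r.sem I x y → r'.sem I x y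

def conjList (l : List CN) : Concept := l.foldr (fun A C => .conj (.atom A) C) .top

def Concept.NoBot : Concept → Prop
  | .bot => False
  | .conj C D => C.NoBot ∧ D.NoBot
  | .ex _ C => C.NoBot
  | _ => True

def IsELIAx : TAxiom → Prop
  | .ci C D => C.NoBot ∧ D.NoBot
  | _ => False

def IsNF : TAxiom → Prop
  | .ri _ _ => True
  | .nri _ _ => True
  | .ci C D =>
      (∃ A, C = .atom A ∧ D = .bot) ∨
      (∃ A r B, C = .atom A ∧ D = .ex r (.atom B)) ∨
      (∃ A, C = .top ∧ D = .atom A) ∨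
      (∃ A B₁ B₂, C = .conj (.atom B₁) (.atom B₂) ∧ D = .atom A) ∨
      (∃ A r B, C = .ex r (.atom B) ∧ D = .atom A)

def Concept.cnOcc (B : CN) : Concept → Prop
  | .atom A => A = B
  | .ex _ C => C.cnOcc B
  | .conj C D => C.cnOcc B ∨ D.cnOcc B
  | _ => False

def TAxiom.cnOcc (B : CN) : TAxiom → Prop
  | .ci C D => C.cnOcc B ∨ D.cnOcc B
  | _ => False

def Assertion.cnOcc (B : CN) : Assertion → Prop
  | .c C _ => C.cnOcc B
  | .r _ _ _ => False

inductive Term where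
  | var (v : ℕ)
  | ind (a : Ind)
deriving DecidableEq

def Term.val (I : Interp) (π : ℕ → I.Dom) : Term → I.Dom
  | .var v => π v
  | .ind a => I.ind a

inductive QAtom where
  | c (B : CN) (t : Term)
  | r (E : NRE) (t t' : Term)

structure CQ where
  avars : List ℕ
  atoms : List QAtom

def QAtom.holds (I : Interp) (π : ℕ → I.Dom) : QAtom → Prop
  | .c B t => t.val I π ∈ I.cn B
  | .r E t t' => E.sem I (t.val I π) (t'.val I π)

def IsMatch (I : Interp) (q : CQ) (π : ℕ → I.Dom) : Prop := ∀ a ∈ q.atoms, a.holds I π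

def AnsIn (I : Interp) (q : CQ) (as : List Ind) : Prop :=
  ∃ π, IsMatch I q π ∧ q.avars.map π = as.map I.ind

def CertAns (T : Set TAxiom) (A : Set Assertion) (q : CQ) (as : List Ind) : Prop :=
  ∀ I, IsModel I T A → AnsIn I q as

def QAtom.NestFree : QAtom → Prop
  | .c _ _ => True
  | .r E _ _ => E.NestFree

def stateTBox (M : NNFA) (As : ∀ i : Fin M.n, M.St i → CN) : Set TAxiom :=
  {ax | (∃ i f, f ∈ M.final i ∧ ax = .ci .top (.atom (As i f))) ∨
        (∃ i s s' r, M.transRole i s (.er r) s' ∧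
          ax = .ci (.ex r (.atom (As i s'))) (.atom (As i s))) ∨
        (∃ i s s' B, M.transRole i s (.ctest B) s' ∧
          ax = .ci (.conj (.atom (As i s')) (.atom B)) (.atom (As i s))) ∨
        (∃ i s j s', M.transTest i s j s' ∧
          ax = .ci (.conj (.atom (As i s')) (.atom (As j (M.init j)))) (.atom (As i s)))}

def ainds (A : Set Assertion) : Set Ind :=
  {a | ∃ α ∈ A, match α with
       | .c _ b => b = a
       | .r _ b c => b = a ∨ c = a}

end Paper
namespace Paper

theorem stateTBox_sound_aux (M : NNFA) (hM : M.NoITest)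
    (As : ∀ i : Fin M.n, M.St i → CN) (I : Interp)
    (hI : ∀ ax ∈ stateTBox M As, ax.holds I)
    {i : Fin M.n} {s : M.St i} {F : Set (M.St i)} {o o' : I.Dom}
    (h : M.Accept I i s F o o') (hF : F ⊆ M.final i) :
    o ∈ I.cn (As i s) := by
  induction h with
  | @refl i s F o hf =>
      have := hI (.ci .top (.atom (As i s))) (Or.inl ⟨i, s, hF hf, rfl⟩)
      exact this (Set.mem_univ o)
  | @step i s s' F σ o o' o'' ht hsem _ ih =>
      cases σ with
      | er r =>
          have := hI (.ci (.ex r (.atom (As i s'))) (.atom (As i s)))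
            (Or.inr (Or.inl ⟨i, s, s', r, ht, rfl⟩))
          exact this ⟨o', hsem, ih hF⟩
      | ctest B =>
          obtain ⟨heq, hB⟩ := hsem
          have := hI (.ci (.conj (.atom (As i s')) (.atom B)) (.atom (As i s)))
            (Or.inr (Or.inr (Or.inl ⟨i, s, s', B, ht, rfl⟩)))
          exact this ⟨heq ▸ ih hF, hB⟩
      | itest a => exact absurd ht (hM i s a s')
  | @test i s s' F j o o₁ o'' ht _ _ ih₁ ih₂ =>
      have := hI (.ci (.conj (.atom (As i s')) (.atom (As j (M.init j)))) (.atom (As i s)))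
        (Or.inr (Or.inr (Or.inr ⟨i, s, j, s', ht, rfl⟩)))
      exact this ⟨ih₂ hF, ih₁ (subset_refl _)⟩

/-- in any model of the state-axiom TBox, if an element has an
outgoing accepting path of the nested NFA from state s, then it satisfies A_s. -/
theorem stateTBox_sound (M : NNFA) (hM : M.NoITest)
    (As : ∀ i : Fin M.n, M.St i → CN) (I : Interp)
    (hI : ∀ ax ∈ stateTBox M As, ax.holds I)
    (i : Fin M.n) (s : M.St i) (o : I.Dom)
    (h : ∃ o', M.Accept I i s (M.final i) o o') :
    o ∈ I.cn (As i s) := by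
  obtain ⟨o', h⟩ := h
  exact stateTBox_sound_aux M hM As I hI h (subset_refl _)

end Paper
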